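/- Let α > 2, α' = α/(α−1), β = α/(α−2), and ℓ > 0. Then there exists a constant C > 0, depending only on α and ℓ, with the following property: if A, λ, μ ∈ ℝ^{3×3} satisfy the first-order optimality condition 0 = μ_{ij} + λ_{Zp} ε_{pjr} ε_{ZiC} A_{Cr} + λ_{Zp} ε_{pqj} ε_{ZBi} A_{Bq} − α ℓ |A|^{α−2} A_{ij} for all i, j ∈ {1,2,3} (summation over repeated indices), then |A|^α ≤ C ( |μ|^{α'} + |λ|^β ). -/

import Mathlib

/-!
Contracting the optimality condition with `A` turns its last term into `α ℓ |A|^α`, while the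
`μ`-term contributes at most a multiple of `|μ| |A|` and the two `λ`-terms, bilinear in `(λ, A)`,
a multiple of `|λ| |A|²`. Hence `α ℓ t^α ≲ |μ| t + |λ| t²` for `t = |A|`, and whichever summand
dominates gives `t^(α-1) ≲ |μ|` or `t^(α-2) ≲ |λ|`, that is `t^α ≲ |μ|^α'` or `t^α ≲ |λ|^β`.
-/

open scoped BigOperators

noncomputable section

/-- `3 × 3` real matrices, as functions of (row, column). -/
abbrev M33 := Fin 3 → Fin 3 → ℝ

/-- The Levi-Civita symbol on indices in `Fin 3`. -/
def eps (i j k : Fin 3) : ℝ :=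
  ((i.val : ℝ) - j.val) * ((j.val : ℝ) - k.val) * ((k.val : ℝ) - i.val) / 2

/-- The Frobenius norm on `M33`. -/
def fnorm (A : M33) : ℝ := Real.sqrt (∑ i, ∑ j, (A i j) ^ 2)

lemma abs_sum_le_card_mul {ι : Type*} [Fintype ι] {f : ι → ℝ} {K : ℝ} (h : ∀ x, |f x| ≤ K) :
    |∑ x, f x| ≤ Fintype.card ι * K := by
  calc |∑ x, f x| ≤ ∑ x, |f x| := Finset.abs_sum_le_sum_abs _ _
    _ ≤ ∑ _x : ι, K := Finset.sum_le_sum fun x _ => h x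
    _ = Fintype.card ι * K := by simp

lemma abs_eps_le (i j k : Fin 3) : |eps i j k| ≤ 1 := by
  fin_cases i <;> fin_cases j <;> fin_cases k <;> norm_num [eps]

lemma fnorm_nonneg (A : M33) : 0 ≤ fnorm A := Real.sqrt_nonneg _

lemma sq_fnorm (A : M33) : fnorm A ^ 2 = ∑ i, ∑ j, A i j ^ 2 :=
  Real.sq_sqrt <| Finset.sum_nonneg fun _ _ => Finset.sum_nonneg fun _ _ => sq_nonneg _

lemma abs_apply_le_fnorm (A : M33) (i j : Fin 3) : |A i j| ≤ fnorm A := by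
  rw [← Real.sqrt_sq_eq_abs]
  refine Real.sqrt_le_sqrt ?_
  calc A i j ^ 2 ≤ ∑ l, A i l ^ 2 :=
        Finset.single_le_sum (f := fun l => A i l ^ 2) (fun _ _ => sq_nonneg _) (Finset.mem_univ j)
    _ ≤ ∑ k, ∑ l, A k l ^ 2 :=
        Finset.single_le_sum (f := fun k => ∑ l, A k l ^ 2)
          (fun _ _ => Finset.sum_nonneg fun _ _ => sq_nonneg _) (Finset.mem_univ i)

lemma abs_mul_eps_mul_eps_mul_le (lam A : M33) (Z p c r x y z u v w : Fin 3) :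
    |lam Z p * eps x y z * eps u v w * A c r| ≤ fnorm lam * fnorm A := by
  have hlam := abs_apply_le_fnorm lam Z p
  have hA := abs_apply_le_fnorm A c r
  have hε₁ := abs_eps_le x y z
  have hε₂ := abs_eps_le u v w
  simp only [abs_mul]
  calc |lam Z p| * |eps x y z| * |eps u v w| * |A c r| ≤ fnorm lam * 1 * 1 * fnorm A := by
        gcongr <;> first | assumption | simp [fnorm_nonneg]
    _ = fnorm lam * fnorm A := by ring

/-- The gradient in `A` of `λ_{Zp} ε_{pqr} ε_{ZBC} A_{Bq} A_{Cr}`, as it appears in the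
optimality condition. -/
def cofGrad (lam A : M33) (i j : Fin 3) : ℝ :=
  (∑ Z, ∑ p, ∑ r, ∑ c, lam Z p * eps p j r * eps Z i c * A c r)
    + (∑ Z, ∑ p, ∑ q, ∑ b, lam Z p * eps p q j * eps Z b i * A b q)

lemma abs_cofGrad_le (lam A : M33) (i j : Fin 3) :
    |cofGrad lam A i j| ≤ 162 * (fnorm lam * fnorm A) := by
  have bound := fun (Z p c r x y z u v w : Fin 3) =>
    abs_mul_eps_mul_eps_mul_le lam A Z p c r x y z u v w
  have h₁ := abs_sum_le_card_mul fun Z => abs_sum_le_card_mul fun p =>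
    abs_sum_le_card_mul fun r => abs_sum_le_card_mul fun c => bound Z p c r p j r Z i c
  have h₂ := abs_sum_le_card_mul fun Z => abs_sum_le_card_mul fun p =>
    abs_sum_le_card_mul fun q => abs_sum_le_card_mul fun b => bound Z p b q p q j Z b i
  simp only [Fintype.card_fin, Nat.cast_ofNat] at h₁ h₂
  calc |cofGrad lam A i j| ≤ _ := abs_add_le _ _
    _ ≤ 162 * (fnorm lam * fnorm A) := by linarith

lemma mul_sq_fnorm_le_of_abs_mul_apply_le {s K : ℝ} {A : M33} (h : ∀ i j, |s * A i j| ≤ K) :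
    s * fnorm A ^ 2 ≤ 9 * K * fnorm A := by
  have entry : ∀ i j, s * A i j * A i j ≤ K * fnorm A := fun i j =>
    calc s * A i j * A i j ≤ |s * A i j| * |A i j| := by rw [← abs_mul]; exact le_abs_self _
      _ ≤ K * fnorm A :=
        mul_le_mul (h i j) (abs_apply_le_fnorm A i j) (abs_nonneg _) ((abs_nonneg _).trans (h i j))
  calc s * fnorm A ^ 2 = ∑ i, ∑ j, s * A i j * A i j := by
        rw [sq_fnorm]
        simp only [Finset.mul_sum, sq, mul_assoc]
    _ ≤ ∑ _i : Fin 3, ∑ _j : Fin 3, K * fnorm A :=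
        Finset.sum_le_sum fun i _ => Finset.sum_le_sum fun j _ => entry i j
    _ = 9 * K * fnorm A := by simp; ring

lemma mul_sq_fnorm_le_of_optimality {s : ℝ} {A lam mu : M33}
    (h : ∀ i j, s * A i j = mu i j + cofGrad lam A i j) :
    s * fnorm A ^ 2 ≤ 9 * fnorm mu * fnorm A + 1458 * fnorm lam * fnorm A ^ 2 := by
  have entry : ∀ i j, |s * A i j| ≤ fnorm mu + 162 * (fnorm lam * fnorm A) := fun i j => by
    rw [h]
    exact (abs_add_le _ _).trans (add_le_add (abs_apply_le_fnorm mu i j) (abs_cofGrad_le lam A i j))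
  linarith [mul_sq_fnorm_le_of_abs_mul_apply_le entry]

lemma rpow_le_div_rpow_of_mul_rpow_le {α e L K t : ℝ} (hα : 0 < α) (he : e < α) (hL : 0 < L)
    (ht : 0 < t) (h : L * t ^ α ≤ K * t ^ e) : t ^ α ≤ (K / L) ^ (α / (α - e)) := by
  have hαe : 0 < α - e := sub_pos.mpr he
  have gap : t ^ (α - e) ≤ K / L := by
    rw [Real.rpow_sub ht, div_le_div_iff₀ (Real.rpow_pos_of_pos ht e) hL]
    linarith
  calc t ^ α = (t ^ (α - e)) ^ (α / (α - e)) := by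
        rw [← Real.rpow_mul ht.le, mul_div_cancel₀ _ hαe.ne']
    _ ≤ (K / L) ^ (α / (α - e)) :=
        Real.rpow_le_rpow (Real.rpow_nonneg ht.le _) gap (div_pos hα hαe).le

lemma rpow_le_of_mul_rpow_le_add_mul_sq {α L a b t : ℝ} (hα : 2 < α) (hL : 0 < L) (ha : 0 ≤ a)
    (hb : 0 ≤ b) (ht : 0 ≤ t) (h : L * t ^ α ≤ a * t + b * t ^ 2) :
    t ^ α ≤ (2 * a / L) ^ (α / (α - 1)) + (2 * b / L) ^ (α / (α - 2)) := by
  have hα₀ : 0 < α := by linarith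
  have ha' : 0 ≤ (2 * a / L) ^ (α / (α - 1)) := Real.rpow_nonneg (by positivity) _
  have hb' : 0 ≤ (2 * b / L) ^ (α / (α - 2)) := Real.rpow_nonneg (by positivity) _
  rcases ht.eq_or_lt with rfl | ht
  · rw [Real.zero_rpow hα₀.ne']
    positivity
  rcases le_total (b * t ^ 2) (a * t) with hdom | hdom
  · have := rpow_le_div_rpow_of_mul_rpow_le (e := 1) (K := 2 * a) hα₀ (by linarith) hL ht
      (by rw [Real.rpow_one]; linarith)
    linarith
  · have := rpow_le_div_rpow_of_mul_rpow_le (e := 2) (K := 2 * b) hα₀ (by linarith) hL ht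
      (by rw [Real.rpow_two]; linarith)
    linarith

theorem stmt15 (α ℓ : ℝ) (hα : 2 < α) (hℓ : 0 < ℓ) :
    ∃ C > 0, ∀ A lam mu : M33,
      (∀ i j : Fin 3,
        0 = mu i j
          + (∑ Z, ∑ p, ∑ r, ∑ c, lam Z p * eps p j r * eps Z i c * A c r)
          + (∑ Z, ∑ p, ∑ q, ∑ b, lam Z p * eps p q j * eps Z b i * A b q)
          - α * ℓ * fnorm A ^ (α - 2) * A i j) →
      fnorm A ^ α ≤ C * (fnorm mu ^ (α / (α - 1)) + fnorm lam ^ (α / (α - 2))) := by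
  have hL : 0 < α * ℓ := mul_pos (by linarith) hℓ
  set c₁ := (18 / (α * ℓ)) ^ (α / (α - 1))
  set c₂ := (2916 / (α * ℓ)) ^ (α / (α - 2))
  have hc₁ : 0 < c₁ := Real.rpow_pos_of_pos (by positivity) _
  have hc₂ : 0 < c₂ := Real.rpow_pos_of_pos (by positivity) _
  refine ⟨c₁ + c₂, by positivity, fun A lam mu h => ?_⟩
  have hpow : fnorm A ^ (α - 2) * fnorm A ^ 2 = fnorm A ^ α := by
    rw [← Real.rpow_two, ← Real.rpow_add' (fnorm_nonneg A) (by linarith), sub_add_cancel]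
  have contracted := mul_sq_fnorm_le_of_optimality (s := α * ℓ * fnorm A ^ (α - 2)) (A := A)
    (lam := lam) (mu := mu) fun i j => by rw [cofGrad]; linarith [h i j]
  rw [mul_assoc, hpow] at contracted
  have key := rpow_le_of_mul_rpow_le_add_mul_sq (a := 9 * fnorm mu) (b := 1458 * fnorm lam) hα hL
    (mul_nonneg (by norm_num) (fnorm_nonneg mu)) (mul_nonneg (by norm_num) (fnorm_nonneg lam))
    (fnorm_nonneg A) (by linarith)
  rw [show 2 * (9 * fnorm mu) / (α * ℓ) = 18 / (α * ℓ) * fnorm mu by ring,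
    show 2 * (1458 * fnorm lam) / (α * ℓ) = 2916 / (α * ℓ) * fnorm lam by ring,
    Real.mul_rpow (by positivity) (fnorm_nonneg mu),
    Real.mul_rpow (by positivity) (fnorm_nonneg lam)] at key
  have hμ := Real.rpow_nonneg (fnorm_nonneg mu) (α / (α - 1))
  have hlam := Real.rpow_nonneg (fnorm_nonneg lam) (α / (α - 2))
  linarith [mul_nonneg hc₁.le hlam, mul_nonneg hc₂.le hμ]
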